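/- Let (A_n)_{n≥3} be a sequence where A_n is a tie-free n×n real matrix with unit Euclidean norm rows satisfying β(A_n) ≥ √(2·log(2n)) − log(log(2n))/√(2·log(2n)). Then the ratio β(A_n) / (2·Σ_{i=1}^n √(W1[1_{S_i(A_n)}])) tends to 1 as n → ∞. -/

import Mathlib

open Finset

noncomputable section
open scoped Classical

/-- The sign `±1` associated to a Boolean. -/
def sgn (b : Bool) : ℝ := if b then 1 else -1

/-- The hypercube `{-1,1}^n` as a finite set of vectors in `ℝ^n`. -/
def cube (n : ℕ) : Finset (Fin n → ℝ) :=
  (Finset.univ : Finset (Fin n → Bool)).image (fun ε i => sgn (ε i))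

/-- `β(A) = 2^{-n} ∑_{x ∈ {-1,1}^n} ‖Ax‖_∞` (the `Pi` norm on `Fin n → ℝ` is the sup norm). -/
def badBeta {n : ℕ} (A : Matrix (Fin n) (Fin n) ℝ) : ℝ :=
  (2 ^ n : ℝ)⁻¹ * ∑ x ∈ cube n, ‖A.mulVec x‖

/-- The cell `S_i(A) = {x ∈ {-1,1}^n : ‖Ax‖_∞ = ⟨a_i, x⟩}`. -/
def cellS {n : ℕ} (A : Matrix (Fin n) (Fin n) ℝ) (i : Fin n) : Finset (Fin n → ℝ) :=
  (cube n).filter (fun x => ‖A.mulVec x‖ = ∑ j, A i j * x j)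

/-- `A` is tie-free: no two distinct rows attain the same absolute inner product with a
hypercube vertex. -/
def TieFree {n : ℕ} (A : Matrix (Fin n) (Fin n) ℝ) : Prop :=
  ∀ x ∈ cube n, ∀ i j : Fin n, i ≠ j →
    (∑ k, A i k * x k) ^ 2 ≠ (∑ k, A j k * x k) ^ 2

/-- Level-1 Fourier weight of `f : {-1,1}^n → ℝ`. -/
def W1 {n : ℕ} (f : (Fin n → ℝ) → ℝ) : ℝ :=
  ∑ i : Fin n, ((2 ^ n : ℝ)⁻¹ * ∑ x ∈ cube n, f x * x i) ^ 2

/-!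
Since `‖A(-x)‖_∞ = ‖Ax‖_∞` and there are no ties, exactly one of `x`, `-x` lies in a cell, so
the cells cover half the cube and `β(A) = 2 ∑ᵢ ⟨aᵢ, f̂ᵢ⟩`, where `f̂ᵢ ∈ ℝⁿ` collects the level-one
Fourier coefficients of `1_{Sᵢ}` and `‖f̂ᵢ‖² = W1[1_{Sᵢ}]`. Cauchy–Schwarz gives
`β(A) ≤ 2 ∑ᵢ ‖f̂ᵢ‖`. Conversely `‖f̂ᵢ‖ = 2⁻ⁿ ∑_{x ∈ Sᵢ} ⟨u, x⟩` for a unit vector `u`; bounding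
`⟨u, x⟩ ≤ t + e^{t⟨u,x⟩ - t²}/t` and using `𝔼 e^{t⟨u,x⟩} ≤ e^{t²/2}` gives
`‖f̂ᵢ‖ ≤ t |Sᵢ|/2ⁿ + e^{-t²/2}/t`, hence `2 ∑ᵢ ‖f̂ᵢ‖ ≤ t + 2n e^{-t²/2}/t`. With `L = log 2n` and
`t² = 2L + 2 log L` this is at most `√(2L) + (log L + 1/L)/√(2L)`, which matches the assumed
lower bound `√(2L) - log L/√(2L)` on `β(A)` up to a factor tending to `1`.
-/

open Real Filter
open scoped Matrix

theorem sgn_injective : Function.Injective sgn := by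
  intro a b
  cases a <;> cases b <;> norm_num [sgn]

theorem sgn_comp_injective (n : ℕ) :
    Function.Injective fun (ε : Fin n → Bool) (i : Fin n) => sgn (ε i) :=
  sgn_injective.comp_left

theorem sum_cube {n : ℕ} (g : (Fin n → ℝ) → ℝ) :
    ∑ x ∈ cube n, g x = ∑ ε : Fin n → Bool, g (fun i => sgn (ε i)) :=
  sum_image fun _ _ _ _ h => sgn_comp_injective n h

theorem card_cube (n : ℕ) : (cube n).card = 2 ^ n := by
  rw [cube, card_image_of_injective _ (sgn_comp_injective n)]
  simp

theorem neg_mem_cube {n : ℕ} {x : Fin n → ℝ} (hx : x ∈ cube n) : -x ∈ cube n := by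
  obtain ⟨ε, -, rfl⟩ := mem_image.mp hx
  refine mem_image.mpr ⟨fun i => !ε i, mem_univ _, funext fun i => ?_⟩
  show sgn (!ε i) = -sgn (ε i)
  cases ε i <;> simp [sgn]

section Cells

variable {n : ℕ} {A : Matrix (Fin n) (Fin n) ℝ}

theorem mem_cellS {i : Fin n} {x : Fin n → ℝ} :
    x ∈ cellS A i ↔ x ∈ cube n ∧ ‖A *ᵥ x‖ = (A *ᵥ x) i :=
  mem_filter

theorem cellS_subset_cube (i : Fin n) : cellS A i ⊆ cube n :=
  filter_subset _ _

theorem TieFree.disjoint_cellS (htie : TieFree A) {i j : Fin n} (hij : i ≠ j) :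
    Disjoint (cellS A i) (cellS A j) := by
  refine disjoint_left.mpr fun x hxi hxj => ?_
  rw [mem_cellS] at hxi hxj
  exact htie x hxi.1 i j hij (show (A *ᵥ x) i ^ 2 = (A *ᵥ x) j ^ 2 by rw [← hxi.2, ← hxj.2])

theorem TieFree.mulVec_ne_zero (htie : TieFree A) (hn : 2 ≤ n) {x : Fin n → ℝ}
    (hx : x ∈ cube n) : A *ᵥ x ≠ 0 := by
  intro h0
  exact htie x hx ⟨0, by omega⟩ ⟨1, by omega⟩ (by simp)
    (show (A *ᵥ x) _ ^ 2 = (A *ᵥ x) _ ^ 2 by simp [h0])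

/-- The row attaining `‖Ax‖_∞` is unique and `‖Ax‖_∞ > 0`, so it cannot attain both
`⟨aᵢ, x⟩ = ‖Ax‖_∞` and `⟨aᵢ, -x⟩ = ‖Ax‖_∞`. -/
theorem TieFree.mem_biUnion_cellS_iff (htie : TieFree A) (hn : 2 ≤ n) {x : Fin n → ℝ}
    (hx : x ∈ cube n) : x ∈ univ.biUnion (cellS A) ↔ -x ∉ univ.biUnion (cellS A) := by
  simp only [mem_biUnion, mem_univ, true_and, mem_cellS, neg_mem_cube hx, hx,
    Matrix.mulVec_neg, norm_neg, Pi.neg_apply, not_exists]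
  constructor
  · rintro ⟨i, hi⟩ j hj
    have hpos : 0 < ‖A *ᵥ x‖ := norm_pos_iff.mpr (htie.mulVec_ne_zero hn hx)
    by_cases hij : i = j
    · subst hij
      linarith
    · exact htie x hx i j hij (show (A *ᵥ x) i ^ 2 = (A *ᵥ x) j ^ 2 by
        rw [← hi, show (A *ᵥ x) j = -‖A *ᵥ x‖ by linarith]; ring)
  · intro h
    have : Nonempty (Fin n) := ⟨⟨0, by omega⟩⟩
    obtain ⟨i, hi⟩ := (IsGreatest.pi_norm (A *ᵥ x)).1
    simp only [norm_eq_abs] at hi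
    refine ⟨i, ?_⟩
    rcases abs_cases ((A *ᵥ x) i) with ⟨habs, -⟩ | ⟨habs, -⟩
    · rw [← hi, habs]
    · exact absurd (by rw [← hi, habs]) (h i)

theorem TieFree.sum_cube_eq_two_mul_sum_cellS (htie : TieFree A) (hn : 2 ≤ n)
    (g : (Fin n → ℝ) → ℝ) (hg : ∀ x, g (-x) = g x) :
    ∑ x ∈ cube n, g x = 2 * ∑ i, ∑ x ∈ cellS A i, g x := by
  have hU : univ.biUnion (cellS A) ⊆ cube n := biUnion_subset.mpr fun i _ => cellS_subset_cube i
  have hcompl : ∑ x ∈ cube n \ univ.biUnion (cellS A), g x = ∑ x ∈ univ.biUnion (cellS A), g x :=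
    sum_nbij' (fun x => -x) (fun x => -x)
      (fun x hx => by
        obtain ⟨hx, hxU⟩ := mem_sdiff.mp hx
        simpa using mt (htie.mem_biUnion_cellS_iff hn hx).mpr hxU)
      (fun x hx => mem_sdiff.mpr
        ⟨neg_mem_cube (hU hx), (htie.mem_biUnion_cellS_iff hn (hU hx)).mp hx⟩)
      (fun x _ => neg_neg x) (fun x _ => neg_neg x) (fun x _ => (hg x).symm)
  rw [← sum_sdiff hU, hcompl, sum_biUnion fun i _ j _ hij => htie.disjoint_cellS hij]
  ring

theorem TieFree.sum_card_cellS (htie : TieFree A) (hn : 2 ≤ n) :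
    ∑ i, ((cellS A i).card : ℝ) = 2 ^ n / 2 := by
  have h := htie.sum_cube_eq_two_mul_sum_cellS hn (fun _ => (1 : ℝ)) fun _ => rfl
  simp only [sum_const, card_cube, nsmul_eq_mul, mul_one] at h
  push_cast at h
  linarith

end Cells

section Rademacher

variable {n : ℕ}

theorem sum_cube_exp_dotProduct_le (v : Fin n → ℝ) :
    ∑ x ∈ cube n, exp (v ⬝ᵥ x) ≤ 2 ^ n * exp ((∑ k, v k ^ 2) / 2) := by
  rw [sum_cube]
  calc ∑ ε : Fin n → Bool, exp (v ⬝ᵥ fun k => sgn (ε k))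
      = ∏ k, ∑ b : Bool, exp (v k * sgn b) := by
        rw [prod_univ_sum, Fintype.piFinset_univ]
        simp [dotProduct, exp_sum]
    _ ≤ ∏ k, 2 * exp (v k ^ 2 / 2) := by
        refine prod_le_prod (fun _ _ => by positivity) fun k _ => ?_
        have := cosh_le_exp_half_sq (v k)
        rw [cosh_eq] at this
        simp only [Fintype.sum_bool, sgn]
        norm_num
        linarith
    _ = 2 ^ n * exp ((∑ k, v k ^ 2) / 2) := by
        rw [prod_mul_distrib, prod_const, ← exp_sum, sum_div, card_univ, Fintype.card_fin]

theorem le_add_exp_mul_sub_sq_div (y : ℝ) {t : ℝ} (ht : 0 < t) :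
    y ≤ t + exp (t * y - t ^ 2) / t := by
  have h := add_one_le_exp (t * (y - t))
  rw [← sub_le_iff_le_add', le_div_iff₀ ht, show t * y - t ^ 2 = t * (y - t) by ring]
  linarith

theorem inv_two_pow_mul_sum_dotProduct_le {S : Finset (Fin n → ℝ)} (hS : S ⊆ cube n)
    {u : Fin n → ℝ} (hu : ∑ k, u k ^ 2 ≤ 1) {t : ℝ} (ht : 0 < t) :
    (2 ^ n : ℝ)⁻¹ * ∑ x ∈ S, u ⬝ᵥ x
      ≤ t * ((2 ^ n : ℝ)⁻¹ * S.card) + exp (-(t ^ 2) / 2) / t := by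
  have htail : ∑ x ∈ S, exp (t * (u ⬝ᵥ x) - t ^ 2) ≤ 2 ^ n * exp (-(t ^ 2) / 2) :=
    calc ∑ x ∈ S, exp (t * (u ⬝ᵥ x) - t ^ 2)
        ≤ ∑ x ∈ cube n, exp ((t • u) ⬝ᵥ x) * exp (-t ^ 2) :=
          sum_le_sum_of_subset_of_nonneg hS (fun _ _ _ => by positivity) |>.trans_eq <|
            sum_congr rfl fun x _ => by rw [← exp_add, smul_dotProduct, smul_eq_mul]; ring_nf
      _ ≤ 2 ^ n * exp ((∑ k, (t • u) k ^ 2) / 2) * exp (-t ^ 2) := by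
          rw [← sum_mul]
          gcongr
          exact sum_cube_exp_dotProduct_le _
      _ ≤ 2 ^ n * exp (-(t ^ 2) / 2) := by
          rw [mul_assoc, ← exp_add]
          gcongr
          simp only [Pi.smul_apply, smul_eq_mul, mul_pow, ← mul_sum]
          nlinarith [sq_nonneg t]
  calc (2 ^ n : ℝ)⁻¹ * ∑ x ∈ S, u ⬝ᵥ x
      ≤ (2 ^ n : ℝ)⁻¹ * ∑ x ∈ S, (t + exp (t * (u ⬝ᵥ x) - t ^ 2) / t) := by
        gcongr with x
        exact le_add_exp_mul_sub_sq_div _ ht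
    _ = (2 ^ n : ℝ)⁻¹ * (t * S.card + (∑ x ∈ S, exp (t * (u ⬝ᵥ x) - t ^ 2)) / t) := by
        rw [sum_add_distrib, sum_const, nsmul_eq_mul, sum_div, mul_comm t]
    _ ≤ (2 ^ n : ℝ)⁻¹ * (t * S.card + 2 ^ n * exp (-(t ^ 2) / 2) / t) := by
        gcongr
    _ = t * ((2 ^ n : ℝ)⁻¹ * S.card) + exp (-(t ^ 2) / 2) / t := by
        field_simp

end Rademacher

section Fourier

variable {n : ℕ}

/-- The level-one Fourier coefficients `k ↦ 2⁻ⁿ ∑_{x ∈ S} x_k` of the indicator of `S`. -/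
def levelOne (S : Finset (Fin n → ℝ)) (k : Fin n) : ℝ :=
  (2 ^ n : ℝ)⁻¹ * ∑ x ∈ S, x k

theorem W1_indicator {S : Finset (Fin n → ℝ)} (hS : S ⊆ cube n) :
    W1 (fun x => if x ∈ S then (1 : ℝ) else 0) = ∑ k, levelOne S k ^ 2 := by
  simp only [W1, levelOne, ite_mul, one_mul, zero_mul, sum_ite_mem, inter_eq_right.mpr hS]

theorem dotProduct_levelOne (u : Fin n → ℝ) (S : Finset (Fin n → ℝ)) :
    u ⬝ᵥ levelOne S = (2 ^ n : ℝ)⁻¹ * ∑ x ∈ S, u ⬝ᵥ x := by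
  simp only [dotProduct, levelOne, mul_sum]
  rw [sum_comm]
  exact sum_congr rfl fun _ _ => sum_congr rfl fun _ _ => by ring

theorem sqrt_sum_levelOne_sq_le {S : Finset (Fin n → ℝ)} (hS : S ⊆ cube n) {t : ℝ} (ht : 0 < t) :
    √(∑ k, levelOne S k ^ 2) ≤ t * ((2 ^ n : ℝ)⁻¹ * S.card) + exp (-(t ^ 2) / 2) / t := by
  set w := √(∑ k, levelOne S k ^ 2)
  have hw0 : 0 ≤ w := sqrt_nonneg _
  rcases hw0.eq_or_lt with hw | hw
  · rw [← hw]
    positivity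
  have hw2 : w ^ 2 = ∑ k, levelOne S k ^ 2 := sq_sqrt (by positivity)
  have hu : ∑ k, (w⁻¹ • levelOne S) k ^ 2 = 1 := by
    simp only [Pi.smul_apply, smul_eq_mul, mul_pow, ← mul_sum, ← hw2]
    field_simp
  have hw_eq : w = (w⁻¹ • levelOne S) ⬝ᵥ levelOne S := by
    rw [smul_dotProduct, smul_eq_mul, dotProduct, ← hw2.trans (sum_congr rfl fun k _ => sq _)]
    field_simp
  rw [hw_eq, dotProduct_levelOne]
  exact inv_two_pow_mul_sum_dotProduct_le hS hu.le ht

variable {A : Matrix (Fin n) (Fin n) ℝ}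

theorem TieFree.badBeta_eq (htie : TieFree A) (hn : 2 ≤ n) :
    badBeta A = 2 * ∑ i, A i ⬝ᵥ levelOne (cellS A i) := by
  have hcell (i : Fin n) : ∑ x ∈ cellS A i, ‖A *ᵥ x‖ = ∑ x ∈ cellS A i, A i ⬝ᵥ x :=
    sum_congr rfl fun x hx => (mem_cellS.mp hx).2
  rw [badBeta, htie.sum_cube_eq_two_mul_sum_cellS hn _ fun x => by rw [Matrix.mulVec_neg, norm_neg],
    mul_left_comm, mul_sum]
  simp only [hcell, dotProduct_levelOne]

theorem TieFree.badBeta_le (htie : TieFree A) (hn : 2 ≤ n) (hrow : ∀ i, ∑ j, A i j ^ 2 = 1) :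
    badBeta A ≤ 2 * ∑ i, √(W1 fun x => if x ∈ cellS A i then (1 : ℝ) else 0) := by
  rw [htie.badBeta_eq hn]
  gcongr with i
  rw [W1_indicator (cellS_subset_cube i)]
  simpa [hrow i, dotProduct] using sum_mul_le_sqrt_mul_sqrt univ (A i) (levelOne (cellS A i))

theorem TieFree.two_mul_sum_sqrt_W1_le (htie : TieFree A) (hn : 2 ≤ n) {t : ℝ} (ht : 0 < t) :
    2 * ∑ i, √(W1 fun x => if x ∈ cellS A i then (1 : ℝ) else 0)
      ≤ t + 2 * n * exp (-(t ^ 2) / 2) / t := by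
  calc 2 * ∑ i, √(W1 fun x => if x ∈ cellS A i then (1 : ℝ) else 0)
      ≤ 2 * ∑ i, (t * ((2 ^ n : ℝ)⁻¹ * (cellS A i).card) + exp (-(t ^ 2) / 2) / t) := by
        gcongr with i
        rw [W1_indicator (cellS_subset_cube i)]
        exact sqrt_sum_levelOne_sq_le (cellS_subset_cube i) ht
    _ = t + 2 * n * exp (-(t ^ 2) / 2) / t := by
        rw [sum_add_distrib, ← mul_sum, ← mul_sum, htie.sum_card_cellS hn]
        simp only [sum_const, card_univ, Fintype.card_fin, nsmul_eq_mul]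
        field_simp

end Fourier

section Asymptotics

theorem sqrt_sq_add_two_mul_le {a b : ℝ} (ha : 0 < a) (hb : 0 ≤ b) :
    √(a ^ 2 + 2 * b) ≤ a + b / a := by
  refine sqrt_le_iff.mpr ⟨by positivity, ?_⟩
  have : (a + b / a) ^ 2 = a ^ 2 + 2 * b + (b / a) ^ 2 := by field_simp; ring
  nlinarith [sq_nonneg (b / a)]

theorem sqrt_add_one_div_mul_sqrt_le {L : ℝ} (hL : 1 ≤ L) :
    √(2 * L + 2 * log L) + 1 / (L * √(2 * L + 2 * log L))
      ≤ (2 * L + log L + 1 / L) / √(2 * L) := by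
  have hlog : 0 ≤ log L := log_nonneg hL
  set s := √(2 * L)
  set t := √(2 * L + 2 * log L)
  have hs : 0 < s := sqrt_pos.mpr (by linarith)
  have hs2 : s ^ 2 = 2 * L := sq_sqrt (by linarith)
  have hst : s ≤ t := sqrt_le_sqrt (by linarith)
  have ht : t ≤ s + log L / s := by
    simpa only [hs2] using sqrt_sq_add_two_mul_le hs hlog
  have hinv : 1 / (L * t) ≤ 1 / (L * s) := by gcongr
  calc t + 1 / (L * t) ≤ s + log L / s + 1 / (L * s) := by linarith
    _ = (2 * L + log L + 1 / L) / s := by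
        field_simp
        rw [hs2]
        ring

theorem one_le_log_two_mul {n : ℕ} (hn : 2 ≤ n) : 1 ≤ log (2 * n) := by
  have hn' : (2 : ℝ) ≤ n := by exact_mod_cast hn
  rw [le_log_iff_exp_le (by positivity)]
  linarith [exp_one_lt_d9]

theorem tendsto_two_mul_sub_log_div :
    Tendsto (fun L => (2 * L - log L) / (2 * L + log L + 1 / L)) atTop (nhds 1) := by
  have hlog := isLittleO_log_id_atTop.tendsto_div_nhds_zero
  have hsq : Tendsto (fun L : ℝ => (L ^ 2)⁻¹) atTop (nhds 0) :=
    tendsto_inv_atTop_zero.comp (tendsto_pow_atTop two_ne_zero)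
  have hlim := ((tendsto_const_nhds (x := (2 : ℝ))).sub hlog).div
    (((tendsto_const_nhds (x := (2 : ℝ))).add hlog).add hsq) (by norm_num)
  norm_num at hlim
  refine hlim.congr' ?_
  filter_upwards [eventually_gt_atTop 0] with L hL
  simp only [Pi.div_apply]
  field_simp

end Asymptotics

section Ratio

variable {n : ℕ} {A : Matrix (Fin n) (Fin n) ℝ}

/-- The choice `t² = 2L + 2 log L`, `L = log 2n`, makes `2n e^{-t²/2} = 1/L`. -/
theorem TieFree.two_mul_sum_sqrt_W1_le_log (htie : TieFree A) (hn : 2 ≤ n) :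
    2 * ∑ i, √(W1 fun x => if x ∈ cellS A i then (1 : ℝ) else 0)
      ≤ (2 * log (2 * n) + log (log (2 * n)) + 1 / log (2 * n)) / √(2 * log (2 * n)) := by
  have hL := one_le_log_two_mul hn
  set L := log (2 * n)
  set t := √(2 * L + 2 * log L)
  have ht : 0 < t := sqrt_pos.mpr (by linarith [log_nonneg hL])
  have hexp : 2 * n * exp (-(t ^ 2) / 2) = 1 / L := by
    rw [sq_sqrt (by linarith [log_nonneg hL]), show -(2 * L + 2 * log L) / 2 = -(L + log L) by ring,
      exp_neg, exp_add, exp_log (by positivity), exp_log (by linarith)]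
    field_simp
  calc 2 * ∑ i, √(W1 fun x => if x ∈ cellS A i then (1 : ℝ) else 0)
      ≤ t + 2 * n * exp (-(t ^ 2) / 2) / t := htie.two_mul_sum_sqrt_W1_le hn ht
    _ = t + 1 / (L * t) := by rw [hexp, div_div]
    _ ≤ (2 * L + log L + 1 / L) / √(2 * L) := sqrt_add_one_div_mul_sqrt_le hL

theorem TieFree.badBeta_div_mem_Icc (htie : TieFree A) (hn : 2 ≤ n)
    (hrow : ∀ i, ∑ j, A i j ^ 2 = 1)
    (hbeta : √(2 * log (2 * n)) - log (log (2 * n)) / √(2 * log (2 * n)) ≤ badBeta A) :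
    badBeta A / (2 * ∑ i, √(W1 fun x => if x ∈ cellS A i then (1 : ℝ) else 0)) ∈
      Set.Icc ((2 * log (2 * n) - log (log (2 * n))) /
        (2 * log (2 * n) + log (log (2 * n)) + 1 / log (2 * n))) 1 := by
  have hL := one_le_log_two_mul hn
  have hbetaD := htie.badBeta_le hn hrow
  have hDle := htie.two_mul_sum_sqrt_W1_le_log hn
  set L := log (2 * n)
  set s := √(2 * L)
  have hs : 0 < s := sqrt_pos.mpr (by linarith)
  have hlow : (2 * L - log L) / s ≤ badBeta A := by
    convert hbeta using 1
    field_simp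
    rw [sq_sqrt (by linarith)]
  have hlow_pos : 0 < (2 * L - log L) / s := by
    have := log_le_sub_one_of_pos (by linarith : 0 < L)
    exact div_pos (by linarith) hs
  have hD : 0 < 2 * ∑ i, √(W1 fun x => if x ∈ cellS A i then (1 : ℝ) else 0) := by linarith
  refine ⟨?_, div_le_one_of_le₀ hbetaD hD.le⟩
  calc (2 * L - log L) / (2 * L + log L + 1 / L)
      = ((2 * L - log L) / s) / ((2 * L + log L + 1 / L) / s) := by
        rw [div_div_div_cancel_right₀ hs.ne']
    _ ≤ _ := div_le_div₀ (by linarith) hlow hD hDle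

end Ratio

theorem stmt7 (A : (n : ℕ) → Matrix (Fin n) (Fin n) ℝ)
    (hrow : ∀ n : ℕ, 3 ≤ n → ∀ i, ∑ j, (A n i j) ^ 2 = 1)
    (htie : ∀ n : ℕ, 3 ≤ n → TieFree (A n))
    (hbeta : ∀ n : ℕ, 3 ≤ n →
      Real.sqrt (2 * Real.log (2 * (n : ℝ))) -
        Real.log (Real.log (2 * (n : ℝ))) / Real.sqrt (2 * Real.log (2 * (n : ℝ))) ≤
          badBeta (A n)) :
    Filter.Tendsto (fun n : ℕ => badBeta (A n) /
        (2 * ∑ i : Fin n, Real.sqrt (W1 (fun x => if x ∈ cellS (A n) i then (1 : ℝ) else 0))))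
      Filter.atTop (nhds 1) := by
  have hlog : Tendsto (fun n : ℕ => log (2 * (n : ℝ))) atTop atTop :=
    tendsto_log_atTop.comp <|
      Tendsto.const_mul_atTop two_pos tendsto_natCast_atTop_atTop
  have hmem (n : ℕ) (hn : 3 ≤ n) :=
    (htie n hn).badBeta_div_mem_Icc (by omega) (hrow n hn) (hbeta n hn)
  refine tendsto_of_tendsto_of_tendsto_of_le_of_le' (tendsto_two_mul_sub_log_div.comp hlog)
    tendsto_const_nhds ?_ ?_ <;> filter_upwards [eventually_ge_atTop 3] with n hn
  exacts [(hmem n hn).1, (hmem n hn).2]
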